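/- arXiv:2009.02495 — 2 statements merged into one kernel-verified Lean document; each statement's English description precedes it below -/
import Mathlib

section
/- Let d ≥ 1, let μ : ℝ^d → [0,∞) be integrable, let λ, ρ, α ∈ (0,∞), and let ξ : [0,∞) → ℝ^d be measurable. Then λ ∫_0^∞ α e^{−α s} ( ∫_{ℝ^d} (1 − exp(−ρ ∫_0^s μ(x − ξ(u)) du)) dx ) ds ≤ λ ρ (∫_{ℝ^d} μ(x) dx) / α. -/
/-!
Since `1 - e^{-t} ≤ t`, the expected infected volume up to time `s` is at most `ρ` times the
space-time integral `∫_ℝ^d ∫_0^s μ(x - ξ u) du dx`. By Tonelli and translation invariance of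
Lebesgue measure this equals `s ι(μ)`, whatever the path `ξ`, and averaging `s` over the
exponential lifetime gives its mean `1/α`.
-/

open MeasureTheory Real

open scoped ENNReal

theorem ofReal_mul_integral_le_mul_lintegral_enorm {α : Type*} [MeasurableSpace α] {ν : Measure α}
    {ρ : ℝ} (hρ : 0 ≤ ρ) (g : α → ℝ) :
    ENNReal.ofReal (ρ * ∫ u, g u ∂ν) ≤ ENNReal.ofReal ρ * ∫⁻ u, ‖g u‖ₑ ∂ν := by
  rw [ENNReal.ofReal_mul hρ]
  gcongr
  exact (ofReal_le_enorm _).trans (enorm_integral_le_lintegral_enorm g)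

section Translation

variable {G ι : Type*} [MeasurableSpace G] [AddGroup G] [MeasurableAdd G] [MeasurableSub₂ G]
  {m : Measure G} [SFinite m] [m.IsAddRightInvariant]
  [MeasurableSpace ι] {ν : Measure ι} [SFinite ν] {ξ : ι → G}

theorem aemeasurable_comp_sub_path {f : G → ℝ≥0∞} (hf : AEMeasurable f m) (hξ : Measurable ξ) :
    AEMeasurable (fun p : G × ι => f (p.1 - ξ p.2)) (m.prod ν) := by
  have hshear : MeasurePreserving (fun p : ι × G => (p.1, p.2 - ξ p.1)) (ν.prod m) (ν.prod m) :=
    (MeasurePreserving.id ν).skew_product (measurable_snd.sub (hξ.comp measurable_fst))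
      (.of_forall fun u => (measurePreserving_sub_right m (ξ u)).map_eq)
  have hf_snd : AEMeasurable (fun p : ι × G => f p.2) (ν.prod m) :=
    hf.comp_quasiMeasurePreserving Measure.quasiMeasurePreserving_snd
  exact (hf_snd.comp_quasiMeasurePreserving hshear.quasiMeasurePreserving
    ).comp_quasiMeasurePreserving Measure.measurePreserving_swap.quasiMeasurePreserving

theorem lintegral_lintegral_comp_sub_path {f : G → ℝ≥0∞} (hf : AEMeasurable f m)
    (hξ : Measurable ξ) :
    ∫⁻ x, ∫⁻ u, f (x - ξ u) ∂ν ∂m = (∫⁻ x, f x ∂m) * ν Set.univ := by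
  rw [lintegral_lintegral_swap (aemeasurable_comp_sub_path hf hξ)]
  simp only [lintegral_sub_right_eq_self, lintegral_const]

theorem lintegral_one_sub_exp_neg_mul_integral_le (hξ : Measurable ξ) {g : G → ℝ}
    (hg : AEMeasurable g m) {ρ : ℝ} (hρ : 0 ≤ ρ) :
    ∫⁻ x, ENNReal.ofReal (1 - exp (-(ρ * ∫ u, g (x - ξ u) ∂ν))) ∂m ≤
      ENNReal.ofReal ρ * ((∫⁻ x, ‖g x‖ₑ ∂m) * ν Set.univ) := by
  calc ∫⁻ x, ENNReal.ofReal (1 - exp (-(ρ * ∫ u, g (x - ξ u) ∂ν))) ∂m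
      ≤ ∫⁻ x, ENNReal.ofReal ρ * ∫⁻ u, ‖g (x - ξ u)‖ₑ ∂ν ∂m := by
        gcongr with x
        exact (ENNReal.ofReal_le_ofReal (by linarith [add_one_le_exp (-(ρ * ∫ u, g (x - ξ u) ∂ν))])
          ).trans (ofReal_mul_integral_le_mul_lintegral_enorm hρ _)
    _ = ENNReal.ofReal ρ * ((∫⁻ x, ‖g x‖ₑ ∂m) * ν Set.univ) := by
        rw [lintegral_const_mul' _ _ ENNReal.ofReal_ne_top,
          lintegral_lintegral_comp_sub_path hg.enorm hξ]

end Translation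

theorem lintegral_Ici_exponential_density_mul_id {α : ℝ} (hα : 0 < α) :
    ∫⁻ s in Set.Ici 0, ENNReal.ofReal (α * exp (-(α * s))) * ENNReal.ofReal s =
      ENNReal.ofReal α⁻¹ := by
  have hmean : ∫ s in Set.Ioi 0, s * exp (-(α * s)) = (α ^ 2)⁻¹ := by
    have := integral_rpow_mul_exp_neg_mul_Ioi two_pos hα
    norm_num at this
    exact this
  -- a non-integrable function would have Bochner integral `0`
  have hint : IntegrableOn (fun s => s * exp (-(α * s))) (Set.Ioi 0) :=
    Integrable.of_integral_ne_zero (by rw [hmean]; positivity)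
  calc ∫⁻ s in Set.Ici 0, ENNReal.ofReal (α * exp (-(α * s))) * ENNReal.ofReal s
      = ∫⁻ s in Set.Ioi 0, ENNReal.ofReal (α * (s * exp (-(α * s)))) := by
        rw [Measure.restrict_congr_set Ioi_ae_eq_Ici.symm]
        refine setLIntegral_congr_fun measurableSet_Ioi fun s _ => ?_
        rw [← ENNReal.ofReal_mul (by positivity)]
        ring_nf
    _ = ENNReal.ofReal α⁻¹ := by
        rw [← ofReal_integral_eq_lintegral_ofReal (hint.const_mul α), integral_const_mul, hmean]
        · field_simp
        · filter_upwards [self_mem_ae_restrict measurableSet_Ioi] with s (hs : 0 < s)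
          positivity

theorem stmt1_general (d : ℕ) (μ : EuclideanSpace ℝ (Fin d) → ℝ)
    (hμ0 : ∀ x, 0 ≤ μ x) (hμint : Integrable μ)
    (lam ρ α : ℝ) (hlam : 0 < lam) (hρ : 0 < ρ) (hα : 0 < α)
    (ξ : ℝ → EuclideanSpace ℝ (Fin d)) (hξ : Measurable ξ) :
    ENNReal.ofReal lam *
        ∫⁻ s in Set.Ici (0:ℝ), ENNReal.ofReal (α * Real.exp (-(α * s))) *
          ∫⁻ x, ENNReal.ofReal
            (1 - Real.exp (-(ρ * ∫ u in Set.Icc (0:ℝ) s, μ (x - ξ u)))) ≤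
      ENNReal.ofReal (lam * ρ * (∫ x, μ x) / α) := by
  set ι := ∫ x, μ x
  have hι : ∫⁻ x, ‖μ x‖ₑ = ENNReal.ofReal ι := by
    rw [← ofReal_integral_norm_eq_lintegral_enorm hμint]
    simp only [norm_of_nonneg (hμ0 _), ι]
  have hspace (s : ℝ) : ∫⁻ x, ENNReal.ofReal
      (1 - exp (-(ρ * ∫ u in Set.Icc (0:ℝ) s, μ (x - ξ u)))) ≤
        ENNReal.ofReal (ρ * ι) * ENNReal.ofReal s := by
    have := lintegral_one_sub_exp_neg_mul_integral_le (ν := volume.restrict (Set.Icc 0 s)) hξ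
      hμint.aemeasurable hρ.le
    rwa [Measure.restrict_apply_univ, volume_Icc, sub_zero, hι, ← mul_assoc,
      ← ENNReal.ofReal_mul hρ.le] at this
  calc _ ≤ ENNReal.ofReal lam * ∫⁻ s in Set.Ici (0:ℝ), ENNReal.ofReal (ρ * ι) *
          (ENNReal.ofReal (α * exp (-(α * s))) * ENNReal.ofReal s) := by
        refine mul_le_mul_right (lintegral_mono fun s => ?_) _
        rw [mul_left_comm]
        exact mul_le_mul_right (hspace s) _
    _ = ENNReal.ofReal (lam * ρ * ι / α) := by
        rw [lintegral_const_mul' _ _ ENNReal.ofReal_ne_top,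
          lintegral_Ici_exponential_density_mul_id hα,
          ← ENNReal.ofReal_mul (mul_nonneg hρ.le (integral_nonneg hμ0)),
          ← ENNReal.ofReal_mul hlam.le]
        congr 1
        ring

theorem stmt1 (d : ℕ) (hd : 1 ≤ d) (μ : EuclideanSpace ℝ (Fin d) → ℝ)
    (hμ0 : ∀ x, 0 ≤ μ x) (hμint : Integrable μ)
    (lam ρ α : ℝ) (hlam : 0 < lam) (hρ : 0 < ρ) (hα : 0 < α)
    (ξ : ℝ → EuclideanSpace ℝ (Fin d)) (hξ : Measurable ξ) :
    ENNReal.ofReal lam *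
        ∫⁻ s in Set.Ici (0:ℝ), ENNReal.ofReal (α * Real.exp (-(α * s))) *
          ∫⁻ x, ENNReal.ofReal
            (1 - Real.exp (-(ρ * ∫ u in Set.Icc (0:ℝ) s, μ (x - ξ u)))) ≤
      ENNReal.ofReal (lam * ρ * (∫ x, μ x) / α) :=
  stmt1_general d μ hμ0 hμint lam ρ α hlam hρ hα ξ hξ
end

section
/- Let g : [0,1] → ℝ³ be a continuous path in three-dimensional Euclidean space, and let ℓ = ‖g(1) − g(0)‖ be the Euclidean distance between its endpoints. Then the Lebesgue measure of the unit sausage ⋃_{t ∈ [0,1]} (g(t) + B̄), where B̄ is the closed unit ball of ℝ³, is at least π ℓ + (4/3)π. -/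
/-!
Project the sausage onto the line through the endpoints, with `g 0` at height `a` and `g 1` at
height `b = a + ‖g 1 - g 0‖`. By the intermediate value theorem every height `s ∈ [a, b]` is
attained by some `g t`, so the slice of the sausage at height `s` contains the unit disc around
the projection of `g t` orthogonal to the line; by Cavalieri this part of the sausage has volume
at least `π (b - a)`. Below height `a` the sausage contains the lower half of the unit ball about
`g 0`, above `b` the upper half of the unit ball about `g 1`; the point reflection through the
centre shows that each half carries half of the volume `4π/3` of the ball.
-/

open MeasureTheory Metric Set Module
open scoped RealInnerProductSpace ENNReal

def unitSausage {X : Type*} [PseudoMetricSpace X] (g : ℝ → X) : Set X :=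
  ⋃ t ∈ Icc (0 : ℝ) 1, closedBall (g t) 1

section Sausage

variable {X : Type*} [PseudoMetricSpace X]

theorem closedBall_subset_unitSausage {g : ℝ → X} {t : ℝ} (ht : t ∈ Icc 0 1) :
    closedBall (g t) 1 ⊆ unitSausage g :=
  subset_biUnion_of_mem (u := fun t => closedBall (g t) 1) ht

theorem measurableSet_unitSausage [ProperSpace X] [MeasurableSpace X] [OpensMeasurableSpace X]
    {g : ℝ → X} (hg : ContinuousOn g (Icc 0 1)) : MeasurableSet (unitSausage g) := by
  have hK := isCompact_Icc.image_of_continuousOn hg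
  rw [unitSausage, ← biUnion_image (g := fun x => closedBall x 1),
    ← hK.cthickening_eq_biUnion_closedBall zero_le_one]
  exact isClosed_cthickening.measurableSet

end Sausage

theorem mul_measure_le_prod_of_le_measure_slice {α β : Type*} [MeasurableSpace α]
    [MeasurableSpace β] {μ : Measure α} {ν : Measure β} [SFinite ν] {A : Set (α × β)}
    (hA : MeasurableSet A) {I : Set α} {m : ℝ≥0∞} (h : ∀ a ∈ I, m ≤ ν (Prod.mk a ⁻¹' A)) :
    m * μ I ≤ μ.prod ν A := by
  rw [Measure.prod_apply hA, ← setLIntegral_const]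
  exact (setLIntegral_mono (measurable_measure_prodMk_left hA) h).trans
    (setLIntegral_le_lintegral _ _)

namespace WithLp

variable {V : Type*} [NormedAddCommGroup V] [InnerProductSpace ℝ V] [FiniteDimensional ℝ V]
  [MeasurableSpace V] [BorelSpace V]

local notation "P" => WithLp 2 (ℝ × V)

theorem volume_eq_prod_preimage_toLp {S : Set P} (hS : MeasurableSet S) :
    volume S = (volume : Measure ℝ).prod (volume : Measure V) (toLp 2 ⁻¹' S) :=
  ((volume_preserving_toLp ℝ V).measure_preimage hS.nullMeasurableSet).symm

theorem volume_setOf_fst_eq (a : ℝ) : volume {x : P | x.fst = a} = 0 := by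
  rw [volume_eq_prod_preimage_toLp (measurableSet_eq_fun (by fun_prop) measurable_const)]
  have : toLp 2 ⁻¹' {x : P | x.fst = a} = {a} ×ˢ univ := by ext; simp
  rw [this, Measure.prod_prod, Real.volume_singleton, zero_mul]

theorem volume_closedBall_inter_fst_lt (x : P) (r : ℝ) :
    volume (closedBall x r ∩ {y | y.fst < x.fst}) =
      volume (closedBall x r ∩ {y | x.fst < y.fst}) := by
  rw [← (Measure.measurePreserving_sub_left volume (x + x)).measure_preimage
    (measurableSet_closedBall.inter
      (measurableSet_lt (by fun_prop) (by fun_prop))).nullMeasurableSet]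
  congr 1
  ext y
  simp only [mem_preimage, mem_inter_iff, mem_closedBall, mem_ofPred_eq, dist_eq_norm, sub_fst,
    add_fst]
  rw [show x + x - y - x = -(y - x) by abel, norm_neg]
  exact and_congr_right' ⟨fun h => by linarith, fun h => by linarith⟩

theorem volume_closedBall_le_inter_fst_lt_add (x : P) (r : ℝ) :
    volume (closedBall x r) ≤
      volume (closedBall x r ∩ {y | y.fst < x.fst}) +
        volume (closedBall x r ∩ {y | x.fst < y.fst}) := by
  calc volume (closedBall x r)
      ≤ volume ((closedBall x r ∩ {y | y.fst < x.fst} ∪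
          closedBall x r ∩ {y | x.fst < y.fst}) ∪ {y | y.fst = x.fst}) := by
        refine measure_mono fun y hy => ?_
        rcases lt_trichotomy y.fst x.fst with h | h | h
        · exact Or.inl (Or.inl ⟨hy, h⟩)
        · exact Or.inr h
        · exact Or.inl (Or.inr ⟨hy, h⟩)
    _ ≤ _ := by
        refine (measure_union_le _ _).trans ?_
        rw [volume_setOf_fst_eq, add_zero]
        exact measure_union_le _ _

theorem volume_closedBall_div_two_le_inter_fst_lt (x : P) (r : ℝ) :
    volume (closedBall x r) / 2 ≤ volume (closedBall x r ∩ {y | y.fst < x.fst}) := by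
  refine ENNReal.div_le_of_le_mul ?_
  simpa [mul_two, ← volume_closedBall_inter_fst_lt] using
    volume_closedBall_le_inter_fst_lt_add x r

theorem volume_closedBall_div_two_le_inter_lt_fst (x : P) (r : ℝ) :
    volume (closedBall x r) / 2 ≤ volume (closedBall x r ∩ {y | x.fst < y.fst}) := by
  refine ENNReal.div_le_of_le_mul ?_
  simpa [mul_two, volume_closedBall_inter_fst_lt] using volume_closedBall_le_inter_fst_lt_add x r

theorem volume_closedBall_mul_le_volume_unitSausage_inter {c : ℝ → P}
    (hc : ContinuousOn c (Icc 0 1)) :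
    volume (closedBall (0 : V) 1) * ENNReal.ofReal ((c 1).fst - (c 0).fst) ≤
      volume (unitSausage c ∩ {x | x.fst ∈ Icc (c 0).fst (c 1).fst}) := by
  have hM : MeasurableSet (unitSausage c ∩ {x : P | x.fst ∈ Icc (c 0).fst (c 1).fst}) :=
    (measurableSet_unitSausage hc).inter (measurableSet_Icc.preimage (by fun_prop))
  rw [← Real.volume_Icc, volume_eq_prod_preimage_toLp hM]
  refine mul_measure_le_prod_of_le_measure_slice (hM.preimage (by fun_prop)) fun s hs => ?_
  obtain ⟨t, ht, hts⟩ :=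
    intermediate_value_Icc zero_le_one ((WithLp.continuous_fst ..).comp_continuousOn hc) hs
  rw [← Measure.addHaar_closedBall_center volume (c t).snd]
  refine measure_mono fun y hy => ⟨closedBall_subset_unitSausage ht ?_, hs⟩
  simp only [Function.comp_apply] at hts
  rw [mem_closedBall, prod_dist_eq_of_L2]
  simpa [hts] using hy

theorem volume_closedBall_mul_add_le_volume_unitSausage {c : ℝ → P}
    (hc : ContinuousOn c (Icc 0 1)) (hfst : (c 0).fst ≤ (c 1).fst) :
    volume (closedBall (0 : V) 1) * ENNReal.ofReal ((c 1).fst - (c 0).fst) +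
      volume (closedBall (0 : P) 1) ≤ volume (unitSausage c) := by
  set A := closedBall (c 0) 1 ∩ {x | x.fst < (c 0).fst}
  set M := unitSausage c ∩ {x | x.fst ∈ Icc (c 0).fst (c 1).fst}
  set C := closedBall (c 1) 1 ∩ {x | (c 1).fst < x.fst}
  have hA : MeasurableSet A :=
    measurableSet_closedBall.inter (measurableSet_lt (by fun_prop) (by fun_prop))
  have hC : MeasurableSet C :=
    measurableSet_closedBall.inter (measurableSet_lt (by fun_prop) (by fun_prop))
  have hAM : Disjoint A M := disjoint_left.2 fun x hA hM => hA.2.not_ge hM.2.1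
  have hAMC : Disjoint (A ∪ M) C := disjoint_left.2 fun x hAM hC => by
    rcases hAM with hA | hM
    · exact hC.2.not_ge (hA.2.le.trans hfst)
    · exact hC.2.not_ge hM.2.2
  have hsub : A ∪ M ∪ C ⊆ unitSausage c :=
    union_subset (union_subset
      (inter_subset_left.trans (closedBall_subset_unitSausage (left_mem_Icc.2 zero_le_one)))
      inter_subset_left)
      (inter_subset_left.trans (closedBall_subset_unitSausage (right_mem_Icc.2 zero_le_one)))
  calc volume (closedBall (0 : V) 1) * ENNReal.ofReal ((c 1).fst - (c 0).fst) +
        volume (closedBall (0 : P) 1)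
      = volume (closedBall (c 0) 1) / 2 +
          volume (closedBall (0 : V) 1) * ENNReal.ofReal ((c 1).fst - (c 0).fst) +
          volume (closedBall (c 1) 1) / 2 := by
        rw [Measure.addHaar_closedBall_center volume (c 0),
          Measure.addHaar_closedBall_center volume (c 1), add_right_comm, ENNReal.add_halves,
          add_comm]
    _ ≤ volume A + volume M + volume C := by
        gcongr
        · exact volume_closedBall_div_two_le_inter_fst_lt _ _
        · exact volume_closedBall_mul_le_volume_unitSausage_inter hc
        · exact volume_closedBall_div_two_le_inter_lt_fst _ _
    _ = volume (A ∪ M ∪ C) := by rw [measure_union hAMC hC, measure_union' hAM hA]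
    _ ≤ volume (unitSausage c) := measure_mono hsub

end WithLp

section

variable {E F : Type*} [NormedAddCommGroup E] [InnerProductSpace ℝ E] [NormedAddCommGroup F]
  [InnerProductSpace ℝ F]

theorem exists_norm_eq_one_inner_eq_norm [Nontrivial E] (v : E) :
    ∃ u : E, ‖u‖ = 1 ∧ ⟪u, v⟫ = ‖v‖ := by
  rcases eq_or_ne v 0 with rfl | hv
  · obtain ⟨u, hu⟩ := exists_norm_eq E zero_le_one
    exact ⟨u, hu, by simp⟩
  · refine ⟨‖v‖⁻¹ • v, by simp [norm_smul, hv], ?_⟩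
    rw [real_inner_smul_left, real_inner_self_eq_norm_sq]
    field_simp

variable [FiniteDimensional ℝ E] [FiniteDimensional ℝ F]

theorem LinearIsometryEquiv.nonempty_of_finrank_eq (h : finrank ℝ E = finrank ℝ F) :
    Nonempty (E ≃ₗᵢ[ℝ] F) :=
  ⟨((stdOrthonormalBasis ℝ E).reindex (finCongr h)).repr.trans (stdOrthonormalBasis ℝ F).repr.symm⟩

theorem exists_linearIsometryEquiv_fst_eq_inner {u : E} (hu : ‖u‖ = 1)
    (hF : finrank ℝ F + 1 = finrank ℝ E) :
    ∃ T : E ≃ₗᵢ[ℝ] WithLp 2 (ℝ × F), ∀ x, (T x).fst = ⟪u, x⟫ := by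
  have hu0 : u ≠ 0 := by rintro rfl; simp at hu
  have hK := (ℝ ∙ u).finrank_add_finrank_orthogonal
  rw [finrank_span_singleton hu0] at hK
  obtain ⟨φ⟩ := LinearIsometryEquiv.nonempty_of_finrank_eq (E := (ℝ ∙ u)ᗮ) (F := F) (by omega)
  refine ⟨(ℝ ∙ u).orthogonalDecomposition.trans
    (LinearIsometryEquiv.withLpProdCongr 2 (LinearIsometryEquiv.toSpanUnitSingleton u hu).symm φ),
    fun x => ?_⟩
  simp only [LinearIsometryEquiv.trans_apply, Submodule.orthogonalDecomposition_apply,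
    LinearIsometryEquiv.withLpProdCongr_apply, WithLp.toLp_fst]
  rw [LinearIsometryEquiv.symm_apply_eq]
  ext
  simp [Submodule.starProjection_unit_singleton ℝ hu]

variable [MeasurableSpace E] [BorelSpace E] [MeasurableSpace F] [BorelSpace F]

theorem LinearIsometryEquiv.volume_unitSausage_comp (T : E ≃ₗᵢ[ℝ] F) (g : ℝ → E) :
    volume (unitSausage (T ∘ g)) = volume (unitSausage g) := by
  rw [← T.measurePreserving.measure_preimage_equiv (f := T.toMeasurableEquiv)]
  congr 1
  ext x
  simp [unitSausage]

theorem LinearIsometryEquiv.volume_closedBall_zero (T : E ≃ₗᵢ[ℝ] F) (r : ℝ) :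
    volume (closedBall (0 : F) r) = volume (closedBall (0 : E) r) := by
  rw [← T.measurePreserving.measure_preimage_equiv (f := T.toMeasurableEquiv)]
  simp

theorem volume_closedBall_mul_add_le_volume_unitSausage (hF : finrank ℝ F + 1 = finrank ℝ E)
    {g : ℝ → E} (hg : ContinuousOn g (Icc 0 1)) :
    volume (closedBall (0 : F) 1) * ENNReal.ofReal ‖g 1 - g 0‖ + volume (closedBall (0 : E) 1) ≤
      volume (unitSausage g) := by
  have : Nontrivial E := Module.nontrivial_of_finrank_pos (R := ℝ) (by omega)
  obtain ⟨u, hu, hug⟩ := exists_norm_eq_one_inner_eq_norm (g 1 - g 0)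
  obtain ⟨T, hT⟩ := exists_linearIsometryEquiv_fst_eq_inner hu hF
  have hfst : (T (g 1)).fst - (T (g 0)).fst = ‖g 1 - g 0‖ := by
    rw [hT, hT, ← inner_sub_right, hug]
  have := WithLp.volume_closedBall_mul_add_le_volume_unitSausage (c := T ∘ g)
    (T.continuous.comp_continuousOn hg) (sub_nonneg.1 (hfst ▸ norm_nonneg _))
  rwa [Function.comp_apply, Function.comp_apply, hfst, T.volume_unitSausage_comp,
    T.volume_closedBall_zero] at this

end

theorem stmt8 (g : ℝ → EuclideanSpace ℝ (Fin 3))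
    (hg : ContinuousOn g (Set.Icc 0 1)) :
    ENNReal.ofReal (Real.pi * ‖g 1 - g 0‖ + (4 / 3) * Real.pi) ≤
      volume (⋃ t ∈ Set.Icc (0:ℝ) 1, Metric.closedBall (g t) 1) := by
  have h := volume_closedBall_mul_add_le_volume_unitSausage (F := EuclideanSpace ℝ (Fin 2))
    (by simp) hg
  rw [EuclideanSpace.volume_closedBall_fin_two, EuclideanSpace.volume_closedBall_fin_three,
    ENNReal.ofReal_one, one_pow, one_pow, one_mul, one_mul, ← ENNReal.ofReal_mul Real.pi_nonneg,
    ← ENNReal.ofReal_add (by positivity) (by positivity)] at h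
  exact le_of_eq_of_le (by ring_nf) h
end
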